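/- For each 1 ≤ ℓ ≤ N there exist R > 0 and a sequence (b_n)_{n≥0} of real numbers with b_0 = ρ_ℓ and b_1 = −a_ℓ ρ_ℓ such that the series ∑_{n=0}^∞ b_n q^{−n} converges absolutely for every q ∈ ℂ with |q| > R, its sum z(q) satisfies ψ(z(q)) = q for every such q, and z(q) = ζ_ℓ(q) for every real q > R. Analogously, for each 1 ≤ ℓ ≤ N̂ there exist R > 0 and real (b̂_n)_{n≥0} with b̂_0 = −ρ̂_ℓ such that −∑_{n=0}^∞ b̂_n q^{−n} converges absolutely for |q| > R, satisfies ψ(−∑_{n=0}^∞ b̂_n q^{−n}) = q there, and equals −ζ̂_ℓ(q) for every real q > R. -/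

import Mathlib

/-!
Near the pole `ρ_ℓ` write `ψ z = g z + z a_ℓ / (ρ_ℓ - z)` with `g` analytic at `ρ_ℓ`. Then
`F z = (ρ_ℓ - z) / ((ρ_ℓ - z) g z + a_ℓ z)` is analytic at `ρ_ℓ`, equals `1 / ψ z` for `z ≠ ρ_ℓ`,
vanishes at `ρ_ℓ` and has derivative `-1 / (a_ℓ ρ_ℓ) ≠ 0` there. Its local inverse `G` is analytic
at `0` with `G 0 = ρ_ℓ` and `G' 0 = -a_ℓ ρ_ℓ`, and `z(q) = G (1 / q)` solves `ψ z = q`; the Taylor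
coefficients of `G` are real because `F` commutes with complex conjugation. As `q → ∞` the root
`ζ_ℓ(q)` tends to `ρ_ℓ`, since `ψ` is bounded above on `(ρ_{ℓ-1}, ρ_ℓ - ε]`, so local injectivity
of `F` forces `ζ_ℓ(q) = G (1 / q)`. The roots `-ζ̂_ℓ` are the interior roots of `z ↦ ψ (-z)`,
again a hyperexponential exponent, with the two families of poles exchanged.
-/

/-- The Laplace exponent of a hyperexponential Lévy process, extended to a rational
function on `ℂ`. -/
noncomputable def psi (σ A : ℝ) (N Nh : ℕ) (aa ρ ah ρh : ℕ → ℝ) (z : ℂ) : ℂ :=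
  (σ : ℂ) ^ 2 * z ^ 2 / 2 + (A : ℂ) * z
    + z * ∑ ℓ ∈ Finset.Icc 1 N, (aa ℓ : ℂ) / ((ρ ℓ : ℂ) - z)
    - z * ∑ ℓ ∈ Finset.Icc 1 Nh, (ah ℓ : ℂ) / ((ρh ℓ : ℂ) + z)

open Filter Complex Finset
open scoped Topology ComplexConjugate

theorem HasFPowerSeriesAt.conj_coeff_eq {f : ℂ → ℂ} {p : FormalMultilinearSeries ℂ ℂ ℂ}
    (hf : HasFPowerSeriesAt f p 0) (hconj : ∀ᶠ z in 𝓝 0, conj (f (conj z)) = f z) (n : ℕ) :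
    conj (p.coeff n) = p.coeff n := by
  have hconj_tendsto : Tendsto conj (𝓝 (0 : ℂ)) (𝓝 0) := by
    simpa using continuous_conj.tendsto (0 : ℂ)
  have hpc : HasFPowerSeriesAt f
      (FormalMultilinearSeries.ofScalars ℂ fun n => conj (p.coeff n)) 0 := by
    rw [hasFPowerSeriesAt_iff] at hf ⊢
    filter_upwards [hconj_tendsto.eventually hf, hconj] with z hsum hz
    simp only [zero_add, FormalMultilinearSeries.coeff_ofScalars, smul_eq_mul] at hsum hz ⊢
    rw [← hz, ← hasSum_conj']
    simpa [mul_comm] using hsum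
  simpa using
    congrArg (FormalMultilinearSeries.coeff · n) (hf.eq_formalMultilinearSeries hpc).symm

section LocalInverse

variable {F : ℂ → ℂ} {x₀ : ℝ} (hF : AnalyticAt ℂ F x₀) (hF' : deriv F x₀ ≠ 0)

local notation "G" => hF.hasStrictDerivAt.localInverse F (deriv F x₀) x₀ hF'

include hF' in
theorem AnalyticAt.localInverse_conj (hconj : ∀ z, F (conj z) = conj (F z)) :
    ∀ᶠ u in 𝓝 (F x₀), conj (G (conj u)) = G u := by
  have hFx₀ : conj (F x₀) = F x₀ := by rw [← hconj, conj_ofReal]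
  have hconj_tendsto : Tendsto conj (𝓝 (F x₀)) (𝓝 (F x₀)) := by
    simpa [hFx₀] using continuous_conj.tendsto (F x₀)
  have hG_tendsto : Tendsto (fun u => conj (G (conj u))) (𝓝 (F x₀)) (𝓝 (x₀ : ℂ)) := by
    have hG : ContinuousAt G (F x₀) :=
      (hF.hasStrictDerivAt.to_localInverse hF').hasDerivAt.continuousAt
    have hGx₀ : G (F x₀) = x₀ := HasStrictFDerivAt.localInverse_apply_image ..
    have := continuous_conj.continuousAt.tendsto.comp (hG.tendsto.comp hconj_tendsto)
    rwa [Function.comp_def, Function.comp_def, hGx₀, conj_ofReal] at this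
  filter_upwards [hG_tendsto.eventually (hF.hasStrictDerivAt.eventually_left_inverse hF'),
    hconj_tendsto.eventually (hF.hasStrictDerivAt.eventually_right_inverse hF')]
    with u hleft hright
  rw [← hleft, hconj, hright, conj_conj]

include hF hF' in
theorem AnalyticAt.exists_real_series_localInverse (hconj : ∀ z, F (conj z) = conj (F z))
    (hF₀ : F x₀ = 0) :
    ∃ b : ℕ → ℝ, b 0 = x₀ ∧ (b 1 : ℂ) = (deriv F x₀)⁻¹ ∧
      (∀ᶠ u in 𝓝 0,
        Summable (fun n => ‖(b n : ℂ) * u ^ n‖) ∧ F (∑' n, (b n : ℂ) * u ^ n) = u) ∧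
      ∀ᶠ w in 𝓝 (x₀ : ℂ), ∑' n, (b n : ℂ) * F w ^ n = w := by
  obtain ⟨p, hp⟩ := hF.analyticAt_localInverse hF'
  rw [hF₀] at hp
  have hreal (n : ℕ) : ((p.coeff n).re : ℂ) = p.coeff n :=
    conj_eq_iff_re.1 <| hp.conj_coeff_eq (hF₀ ▸ hF.localInverse_conj hF' hconj) n
  have hsum : ∀ᶠ u in 𝓝 0, HasSum (fun n => ((p.coeff n).re : ℂ) * u ^ n) (G u) := by
    filter_upwards [hasFPowerSeriesAt_iff.1 hp] with u hu
    simpa [hreal, mul_comm] using hu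
  have hnorm : ∀ᶠ u in 𝓝 0, Summable (fun n => ‖((p.coeff n).re : ℂ) * u ^ n‖) := by
    filter_upwards [Metric.eball_mem_nhds 0 hp.radius_pos] with u hu
    simpa [hreal, mul_comm] using p.summable_norm_apply hu
  have hG₀ : G (F x₀) = x₀ := HasStrictFDerivAt.localInverse_apply_image ..
  have hGderiv := (hF.hasStrictDerivAt.to_localInverse hF').hasDerivAt.deriv
  refine ⟨fun n => (p.coeff n).re, ?_, ?_, ?_, ?_⟩
  · rw [← ofReal_inj, hreal, ← hG₀, hF₀, ← hp.coeff_zero]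
    rfl
  · rw [hreal, ← hGderiv, hF₀, hp.deriv]
    rfl
  · rw [← hF₀] at hsum hnorm ⊢
    filter_upwards [hsum, hnorm, hF.hasStrictDerivAt.eventually_right_inverse hF']
      with u hu hn hright
    exact ⟨hn, by rw [hu.tsum_eq, hright]⟩
  · have hF_tendsto : Tendsto F (𝓝 (x₀ : ℂ)) (𝓝 0) := hF₀ ▸ hF.continuousAt.tendsto
    filter_upwards [hF_tendsto.eventually hsum, hF.hasStrictDerivAt.eventually_left_inverse hF']
      with w hw hleft
    rw [hw.tsum_eq, hleft]

end LocalInverse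

theorem exists_real_series_inverse_of_simple_pole {ψ g : ℂ → ℂ} {x₀ c : ℝ} (hx₀ : x₀ ≠ 0)
    (hc : c ≠ 0) (hg : AnalyticAt ℂ g x₀) (hgconj : ∀ z, g (conj z) = conj (g z))
    (hψ : ∀ z, ψ z = g z + z * (c / (x₀ - z))) :
    ∃ b : ℕ → ℝ, b 0 = x₀ ∧ b 1 = -(c * x₀) ∧
      (∀ᶠ u in 𝓝[≠] 0,
        Summable (fun n => ‖(b n : ℂ) * u ^ n‖) ∧ ψ (∑' n, (b n : ℂ) * u ^ n) = u⁻¹) ∧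
      ∀ᶠ w in 𝓝[≠] (x₀ : ℂ), ∑' n, (b n : ℂ) * (ψ w)⁻¹ ^ n = w := by
  set F : ℂ → ℂ := fun z => (x₀ - z) / ((x₀ - z) * g z + c * z) with hF
  have hFψ (z : ℂ) (hz : z ≠ x₀) : F z = (ψ z)⁻¹ := by
    have : ψ z = ((x₀ - z) * g z + c * z) / (x₀ - z) := by
      rw [hψ]
      field_simp [sub_ne_zero.2 hz.symm]
    rw [this, inv_div]
  have hcx₀ : (c * x₀ : ℂ) ≠ 0 := by exact_mod_cast mul_ne_zero hc hx₀
  have hden : ((x₀ : ℂ) - x₀) * g x₀ + c * x₀ ≠ 0 := by rwa [sub_self, zero_mul, zero_add]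
  have hFa : AnalyticAt ℂ F x₀ := by fun_prop (disch := exact hden)
  have hFderiv : HasDerivAt F (-(c * x₀ : ℂ)⁻¹) x₀ := by
    have hlin : HasDerivAt (fun z : ℂ => (x₀ : ℂ) - z) (-1) x₀ := by
      simpa using (hasDerivAt_id (x₀ : ℂ)).const_sub (x₀ : ℂ)
    refine (hlin.div ((hlin.mul hg.differentiableAt.hasDerivAt).add
      ((hasDerivAt_id' _).const_mul (c : ℂ))) hden).congr_deriv ?_
    simp only [Pi.add_apply, Pi.mul_apply, sub_self, zero_mul, zero_add, sub_zero]
    field_simp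
  have hFconj (z : ℂ) : F (conj z) = conj (F z) := by
    simp only [hF, map_div₀, map_add, map_sub, map_mul, hgconj, conj_ofReal]
  obtain ⟨b, hb0, hb1, hseries, hinv⟩ := hFa.exists_real_series_localInverse
    (by rw [hFderiv.deriv]; exact neg_ne_zero.2 (inv_ne_zero hcx₀)) hFconj (by simp [hF])
  refine ⟨b, hb0, ?_, ?_, ?_⟩
  · rw [hFderiv.deriv, inv_neg, inv_inv] at hb1
    exact_mod_cast hb1
  · filter_upwards [eventually_nhdsWithin_of_eventually_nhds hseries, self_mem_nhdsWithin]
      with u ⟨hsum, hu⟩ hu₀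
    refine ⟨hsum, ?_⟩
    have hne : ∑' n, (b n : ℂ) * u ^ n ≠ x₀ := fun h => hu₀ (by rw [← hu, h]; simp [hF])
    rw [← inv_inv (ψ _), ← hFψ _ hne, hu]
  · filter_upwards [eventually_nhdsWithin_of_eventually_nhds hinv, self_mem_nhdsWithin]
      with w hw hwx₀
    rwa [← hFψ w hwx₀]

section Psi

variable (σ A : ℝ) (N Nh : ℕ) (aa ρ ah ρh : ℕ → ℝ)

theorem psi_neg (z : ℂ) : psi σ A N Nh aa ρ ah ρh (-z) = psi σ (-A) Nh N ah ρh aa ρ z := by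
  simp only [psi, sub_neg_eq_add, ← sub_eq_add_neg, ofReal_neg]
  ring

theorem psi_conj (z : ℂ) :
    psi σ A N Nh aa ρ ah ρh (conj z) = conj (psi σ A N Nh aa ρ ah ρh z) := by
  simp only [psi, map_add, map_sub, map_mul, map_div₀, map_pow, map_sum, map_ofNat, conj_ofReal]

theorem psi_ofReal (x : ℝ) :
    psi σ A N Nh aa ρ ah ρh x = ((σ ^ 2 * x ^ 2 / 2 + A * x
      + x * ∑ k ∈ Icc 1 N, aa k / (ρ k - x) - x * ∑ k ∈ Icc 1 Nh, ah k / (ρh k + x) : ℝ) : ℂ) := by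
  push_cast [psi]
  rfl

theorem analyticAt_psi {z : ℂ} (hz : ∀ k ∈ Icc 1 N, aa k = 0 ∨ (ρ k : ℂ) - z ≠ 0)
    (hzh : ∀ k ∈ Icc 1 Nh, ah k = 0 ∨ (ρh k : ℂ) + z ≠ 0) :
    AnalyticAt ℂ (psi σ A N Nh aa ρ ah ρh) z := by
  have hsum : ∀ k ∈ Icc 1 N, AnalyticAt ℂ (fun w : ℂ => (aa k : ℂ) / (ρ k - w)) z := by
    intro k hk
    rcases hz k hk with h | h
    · simp only [h, ofReal_zero, zero_div]
      exact analyticAt_const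
    · fun_prop (disch := exact h)
  have hsumh : ∀ k ∈ Icc 1 Nh, AnalyticAt ℂ (fun w : ℂ => (ah k : ℂ) / (ρh k + w)) z := by
    intro k hk
    rcases hzh k hk with h | h
    · simp only [h, ofReal_zero, zero_div]
      exact analyticAt_const
    · fun_prop (disch := exact h)
  have := analyticAt_fun_sum _ hsum
  have := analyticAt_fun_sum _ hsumh
  unfold psi
  fun_prop

theorem psi_eq_update_add {ℓ : ℕ} (hℓ : ℓ ∈ Icc 1 N) (z : ℂ) :
    psi σ A N Nh aa ρ ah ρh z
      = psi σ A N Nh (Function.update aa ℓ 0) ρ ah ρh z + z * (aa ℓ / (ρ ℓ - z)) := by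
  have hsum : ∑ k ∈ Icc 1 N, ((Function.update aa ℓ 0 k : ℝ) : ℂ) / (ρ k - z)
      = ∑ k ∈ (Icc 1 N).erase ℓ, (aa k : ℂ) / (ρ k - z) := by
    rw [← add_sum_erase _ _ hℓ, Function.update_self, ofReal_zero, zero_div, zero_add]
    exact sum_congr rfl fun k hk => by rw [Function.update_of_ne (ne_of_mem_erase hk)]
  simp only [psi, hsum, ← add_sum_erase _ _ hℓ]
  ring

theorem exists_re_psi_le (haa : ∀ k ∈ Icc 1 N, 0 ≤ aa k) (hah : ∀ k ∈ Icc 1 Nh, 0 ≤ ah k)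
    (hρh : ∀ k ∈ Icc 1 Nh, 0 < ρh k) (hρ : MonotoneOn ρ (Set.Iic N)) {ℓ : ℕ}
    (hℓ : ℓ ∈ Icc 1 N) {a : ℝ} (ha : a < ρ ℓ) :
    ∃ M, ∀ x, 0 ≤ x → ρ (ℓ - 1) < x → x ≤ a → (psi σ A N Nh aa ρ ah ρh x).re ≤ M := by
  refine ⟨σ ^ 2 * ρ ℓ ^ 2 / 2 + |A| * ρ ℓ + ∑ k ∈ Icc 1 N, ρ ℓ * (aa k / (ρ ℓ - a)),
    fun x hx₀ hxℓ hxa => ?_⟩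
  have hℓN := (mem_Icc.1 hℓ).2
  have hxρ : x ≤ ρ ℓ := hxa.trans ha.le
  have hpoles :
      x * ∑ k ∈ Icc 1 N, aa k / (ρ k - x) ≤ ∑ k ∈ Icc 1 N, ρ ℓ * (aa k / (ρ ℓ - a)) := by
    rw [mul_sum]
    refine sum_le_sum fun k hk => ?_
    have hkN := (mem_Icc.1 hk).2
    have hbound : 0 ≤ ρ ℓ * (aa k / (ρ ℓ - a)) :=
      mul_nonneg (hx₀.trans hxρ) (div_nonneg (haa k hk) (sub_pos.2 ha).le)
    rcases lt_or_ge k ℓ with hkℓ | hℓk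
    · have hρk : ρ k < x :=
        (hρ (Set.mem_Iic.2 (by omega)) (Set.mem_Iic.2 (by omega)) (by omega)).trans_lt hxℓ
      exact (mul_nonpos_of_nonneg_of_nonpos hx₀
        (div_nonpos_of_nonneg_of_nonpos (haa k hk) (sub_neg.2 hρk).le)).trans hbound
    · have hρk : ρ ℓ ≤ ρ k := hρ (Set.mem_Iic.2 hℓN) (Set.mem_Iic.2 hkN) hℓk
      exact mul_le_mul hxρ (div_le_div_of_nonneg_left (haa k hk) (sub_pos.2 ha) (by linarith))
        (div_nonneg (haa k hk) (by linarith)) (hx₀.trans hxρ)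
  have hpolesh : 0 ≤ x * ∑ k ∈ Icc 1 Nh, ah k / (ρh k + x) :=
    mul_nonneg hx₀ <| sum_nonneg fun k hk =>
      div_nonneg (hah k hk) (add_pos_of_pos_of_nonneg (hρh k hk) hx₀).le
  have hquad : σ ^ 2 * x ^ 2 / 2 ≤ σ ^ 2 * ρ ℓ ^ 2 / 2 := by gcongr
  have hlin : A * x ≤ |A| * ρ ℓ := by nlinarith [abs_nonneg A, le_abs_self A]
  rw [psi_ofReal, ofReal_re]
  linarith

end Psi

theorem pos_of_strictMonoOn {ρ : ℕ → ℝ} {N : ℕ} (hρ0 : ρ 0 = 0)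
    (hρ : StrictMonoOn ρ (Set.Iic N)) {k : ℕ} (hk : k ∈ Icc 1 N) : 0 < ρ k :=
  hρ0 ▸ hρ (Set.mem_Iic.2 (Nat.zero_le N)) (Set.mem_Iic.2 (mem_Icc.1 hk).2) (mem_Icc.1 hk).1

theorem exists_forall_inv_and_forall_gt {P : ℂ → Prop} {Q : ℝ → Prop}
    (hP : ∀ᶠ u in 𝓝[≠] 0, P u) (hQ : ∀ᶠ q in atTop, Q q) :
    ∃ R > 0, (∀ q : ℂ, R < ‖q‖ → P q⁻¹) ∧ ∀ q : ℝ, R < q → Q q := by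
  obtain ⟨R₁, -, hR₁⟩ :=
    hasBasis_cobounded_norm.eventually_iff.1 (tendsto_inv₀_cobounded'.eventually hP)
  obtain ⟨R₂, hR₂⟩ := eventually_atTop.1 hQ
  refine ⟨max (max R₁ R₂) 1, by positivity, fun q hq => hR₁ ?_, fun q hq => hR₂ q ?_⟩
  · exact (le_max_left _ _).trans ((le_max_left _ _).trans hq.le)
  · exact (le_max_right _ _).trans ((le_max_left _ _).trans hq.le)

section InteriorRoot

variable (σ A : ℝ) (N Nh : ℕ) (aa ρ ah ρh : ℕ → ℝ)

theorem tendsto_interior_root (haa : ∀ k ∈ Icc 1 N, 0 ≤ aa k) (hah : ∀ k ∈ Icc 1 Nh, 0 ≤ ah k)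
    (hρ0 : ρ 0 = 0) (hρ : MonotoneOn ρ (Set.Iic N)) (hρh : ∀ k ∈ Icc 1 Nh, 0 < ρh k) {ℓ : ℕ}
    (hℓ : ℓ ∈ Icc 1 N) {ζ : ℝ → ℝ}
    (hζ : ∀ q : ℝ, 0 < q →
      ζ q ∈ Set.Ioo (ρ (ℓ - 1)) (ρ ℓ) ∧ psi σ A N Nh aa ρ ah ρh (ζ q : ℂ) = (q : ℂ)) :
    Tendsto ζ atTop (𝓝[<] ρ ℓ) := by
  have hρℓ₁ : 0 ≤ ρ (ℓ - 1) := hρ0 ▸ hρ (Set.mem_Iic.2 (Nat.zero_le N))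
    (Set.mem_Iic.2 (by have := (mem_Icc.1 hℓ).2; omega)) (Nat.zero_le _)
  refine tendsto_nhdsWithin_iff.2 ⟨tendsto_order.2 ⟨fun a ha => ?_, fun a ha => ?_⟩, ?_⟩
  · obtain ⟨M, hM⟩ := exists_re_psi_le σ A N Nh aa ρ ah ρh haa hah hρh hρ hℓ ha
    filter_upwards [eventually_gt_atTop (max M 0)] with q hq
    obtain ⟨⟨hζℓ₁, -⟩, hψ⟩ := hζ q (lt_of_le_of_lt (le_max_right _ _) hq)
    by_contra! hζa
    have := hM (ζ q) (hρℓ₁.trans hζℓ₁.le) hζℓ₁ hζa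
    rw [hψ, ofReal_re] at this
    linarith [le_max_left M 0]
  · filter_upwards [eventually_gt_atTop 0] with q hq using (hζ q hq).1.2.trans ha
  · filter_upwards [eventually_gt_atTop 0] with q hq using (hζ q hq).1.2

theorem exists_series_interior_root (haa : ∀ k ∈ Icc 1 N, 0 < aa k)
    (hah : ∀ k ∈ Icc 1 Nh, 0 ≤ ah k) (hρ0 : ρ 0 = 0) (hρ : StrictMonoOn ρ (Set.Iic N))
    (hρh : ∀ k ∈ Icc 1 Nh, 0 < ρh k) {ℓ : ℕ} (hℓ : ℓ ∈ Icc 1 N) (ζ : ℝ → ℝ)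
    (hζ : ∀ q : ℝ, 0 < q →
      ζ q ∈ Set.Ioo (ρ (ℓ - 1)) (ρ ℓ) ∧ psi σ A N Nh aa ρ ah ρh (ζ q : ℂ) = (q : ℂ)) :
    ∃ R > (0 : ℝ), ∃ b : ℕ → ℝ, b 0 = ρ ℓ ∧ b 1 = -(aa ℓ * ρ ℓ) ∧
      (∀ q : ℂ, R < ‖q‖ →
        Summable (fun n : ℕ => ‖(b n : ℂ) * q ^ (-(n : ℤ))‖) ∧
        psi σ A N Nh aa ρ ah ρh (∑' n : ℕ, (b n : ℂ) * q ^ (-(n : ℤ))) = q) ∧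
      (∀ q : ℝ, R < q → (∑' n : ℕ, (b n : ℂ) * (q : ℂ) ^ (-(n : ℤ))) = (ζ q : ℂ)) := by
  have hρℓ : 0 < ρ ℓ := pos_of_strictMonoOn hρ0 hρ hℓ
  have hg : AnalyticAt ℂ (psi σ A N Nh (Function.update aa ℓ 0) ρ ah ρh) (ρ ℓ) := by
    refine analyticAt_psi _ _ _ _ _ _ _ _ (fun k hk => ?_) (fun k hk => Or.inr ?_)
    · rcases eq_or_ne k ℓ with rfl | hkℓ
      · exact Or.inl (Function.update_self ..)
      · refine Or.inr (sub_ne_zero.2 (ofReal_injective.ne (hρ.injOn.ne ?_ ?_ hkℓ)))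
        · exact Set.mem_Iic.2 (mem_Icc.1 hk).2
        · exact Set.mem_Iic.2 (mem_Icc.1 hℓ).2
    · exact_mod_cast (add_pos (hρh k hk) hρℓ).ne'
  obtain ⟨b, hb0, hb1, hseries, hinv⟩ := exists_real_series_inverse_of_simple_pole hρℓ.ne'
    (haa ℓ hℓ).ne' hg (psi_conj _ _ _ _ _ _ _ _) (psi_eq_update_add σ A N Nh aa ρ ah ρh hℓ)
  have hζ_tendsto : Tendsto (fun q => (ζ q : ℂ)) atTop (𝓝[≠] (ρ ℓ : ℂ)) :=
    (continuous_ofReal.continuousWithinAt.tendsto_nhdsWithin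
      fun x hx => ofReal_injective.ne (ne_of_lt hx)).comp
      (tendsto_interior_root σ A N Nh aa ρ ah ρh (fun k hk => (haa k hk).le) hah hρ0
        hρ.monotoneOn hρh hℓ hζ)
  have hroot : ∀ᶠ q : ℝ in atTop, ∑' n, (b n : ℂ) * (q : ℂ)⁻¹ ^ n = ζ q := by
    filter_upwards [hζ_tendsto.eventually hinv, eventually_gt_atTop 0] with q hq hq₀
    rwa [(hζ q hq₀).2] at hq
  obtain ⟨R, hR, hcomplex, hreal⟩ := exists_forall_inv_and_forall_gt hseries hroot
  refine ⟨R, hR, b, hb0, hb1, fun q hq => ?_, fun q hq => ?_⟩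
  · simpa only [zpow_neg, zpow_natCast, inv_pow, inv_inv] using hcomplex q hq
  · simpa only [zpow_neg, zpow_natCast, inv_pow] using hreal q hq

end InteriorRoot

theorem interior_roots_series_general
    (σ A : ℝ) (N Nh : ℕ) (aa ρ ah ρh : ℕ → ℝ)
    (hpos : ∀ ℓ ∈ Finset.Icc 1 N, 0 < aa ℓ)
    (hposh : ∀ ℓ ∈ Finset.Icc 1 Nh, 0 < ah ℓ)
    (hρ0 : ρ 0 = 0) (hρh0 : ρh 0 = 0)
    (hmono : ∀ i j, i < j → j ≤ N → ρ i < ρ j)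
    (hmonoh : ∀ i j, i < j → j ≤ Nh → ρh i < ρh j)
    -- `ζ ℓ q` is the unique solution of `ψ = q` in `(ρ_{ℓ-1}, ρ_ℓ)` and
    -- `-(ζh ℓ q)` the unique one in `(-ρ̂_ℓ, -ρ̂_{ℓ-1})`
    (ζ ζh : ℕ → ℝ → ℝ)
    (hζ : ∀ ℓ ∈ Finset.Icc 1 N, ∀ q : ℝ, 0 < q →
        ζ ℓ q ∈ Set.Ioo (ρ (ℓ - 1)) (ρ ℓ) ∧
        psi σ A N Nh aa ρ ah ρh (ζ ℓ q : ℂ) = (q : ℂ))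
    (hζh : ∀ ℓ ∈ Finset.Icc 1 Nh, ∀ q : ℝ, 0 < q →
        -(ζh ℓ q) ∈ Set.Ioo (-(ρh ℓ)) (-(ρh (ℓ - 1))) ∧
        psi σ A N Nh aa ρ ah ρh (-(ζh ℓ q : ℝ) : ℂ) = (q : ℂ)) :
    (∀ ℓ ∈ Finset.Icc 1 N,
      ∃ R > (0 : ℝ), ∃ b : ℕ → ℝ, b 0 = ρ ℓ ∧ b 1 = -(aa ℓ * ρ ℓ) ∧
        (∀ q : ℂ, R < ‖q‖ →
          Summable (fun n : ℕ => ‖(b n : ℂ) * q ^ (-(n : ℤ))‖) ∧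
          psi σ A N Nh aa ρ ah ρh (∑' n : ℕ, (b n : ℂ) * q ^ (-(n : ℤ))) = q) ∧
        (∀ q : ℝ, R < q →
          (∑' n : ℕ, (b n : ℂ) * (q : ℂ) ^ (-(n : ℤ))) = (ζ ℓ q : ℂ))) ∧
    (∀ ℓ ∈ Finset.Icc 1 Nh,
      ∃ R > (0 : ℝ), ∃ bh : ℕ → ℝ, bh 0 = -(ρh ℓ) ∧
        (∀ q : ℂ, R < ‖q‖ →
          Summable (fun n : ℕ => ‖(bh n : ℂ) * q ^ (-(n : ℤ))‖) ∧
          psi σ A N Nh aa ρ ah ρh (∑' n : ℕ, (bh n : ℂ) * q ^ (-(n : ℤ))) = q) ∧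
        (∀ q : ℝ, R < q →
          (∑' n : ℕ, (bh n : ℂ) * (q : ℂ) ^ (-(n : ℤ))) = (-(ζh ℓ q : ℝ) : ℂ))) := by
  have hρ : StrictMonoOn ρ (Set.Iic N) := fun i _ j hj hij => hmono i j hij hj
  have hρh : StrictMonoOn ρh (Set.Iic Nh) := fun i _ j hj hij => hmonoh i j hij hj
  have hρpos (k : ℕ) (hk : k ∈ Icc 1 N) : 0 < ρ k := pos_of_strictMonoOn hρ0 hρ hk
  have hρhpos (k : ℕ) (hk : k ∈ Icc 1 Nh) : 0 < ρh k := pos_of_strictMonoOn hρh0 hρh hk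
  refine ⟨fun ℓ hℓ => exists_series_interior_root σ A N Nh aa ρ ah ρh hpos
    (fun k hk => (hposh k hk).le) hρ0 hρ hρhpos hℓ (ζ ℓ) (hζ ℓ hℓ), fun ℓ hℓ => ?_⟩
  have hζh' (q : ℝ) (hq : 0 < q) : ζh ℓ q ∈ Set.Ioo (ρh (ℓ - 1)) (ρh ℓ) ∧
      psi σ (-A) Nh N ah ρh aa ρ (ζh ℓ q : ℂ) = (q : ℂ) := by
    obtain ⟨⟨h₁, h₂⟩, hψ⟩ := hζh ℓ hℓ q hq
    exact ⟨⟨neg_lt_neg_iff.1 h₂, neg_lt_neg_iff.1 h₁⟩, by rwa [psi_neg] at hψ⟩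
  obtain ⟨R, hR, b, hb0, -, hcomplex, hreal⟩ := exists_series_interior_root σ (-A) Nh N ah ρh aa ρ
    hposh (fun k hk => (hpos k hk).le) hρh0 hρh hρpos hℓ (ζh ℓ) hζh'
  refine ⟨R, hR, -b, by simp [hb0], fun q hq => ?_, fun q hq => ?_⟩
  · obtain ⟨hsum, hψ⟩ := hcomplex q hq
    simp only [Pi.neg_apply, ofReal_neg, neg_mul, norm_neg, tsum_neg, psi_neg]
    exact ⟨hsum, hψ⟩
  · simp only [Pi.neg_apply, ofReal_neg, neg_mul, tsum_neg, hreal q hq]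

/-- Series expansions of the "interior" roots of `ψ = q`: for each `1 ≤ ℓ ≤ N` there is a
series `∑_{n≥0} b_n q^{-n}` with `b_0 = ρ_ℓ`, `b_1 = -a_ℓ ρ_ℓ`, converging absolutely for
`|q| > R`, whose sum solves `ψ = q` and equals `ζ_ℓ(q)` for real `q > R`; analogously for
each `1 ≤ ℓ ≤ N̂` with `b̂_0 = -ρ̂_ℓ`, the sum being `-ζ̂_ℓ(q)`. -/
theorem interior_roots_series
    (σ A : ℝ) (N Nh : ℕ) (aa ρ ah ρh : ℕ → ℝ)
    (hσ : 0 ≤ σ)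
    (hpos : ∀ ℓ ∈ Finset.Icc 1 N, 0 < aa ℓ)
    (hposh : ∀ ℓ ∈ Finset.Icc 1 Nh, 0 < ah ℓ)
    (hρ0 : ρ 0 = 0) (hρh0 : ρh 0 = 0)
    (hmono : ∀ i j, i < j → j ≤ N → ρ i < ρ j)
    (hmonoh : ∀ i j, i < j → j ≤ Nh → ρh i < ρh j)
    -- `ζ ℓ q` is the unique solution of `ψ = q` in `(ρ_{ℓ-1}, ρ_ℓ)` and
    -- `-(ζh ℓ q)` the unique one in `(-ρ̂_ℓ, -ρ̂_{ℓ-1})`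
    (ζ ζh : ℕ → ℝ → ℝ)
    (hζ : ∀ ℓ ∈ Finset.Icc 1 N, ∀ q : ℝ, 0 < q →
        ζ ℓ q ∈ Set.Ioo (ρ (ℓ - 1)) (ρ ℓ) ∧
        psi σ A N Nh aa ρ ah ρh (ζ ℓ q : ℂ) = (q : ℂ))
    (hζh : ∀ ℓ ∈ Finset.Icc 1 Nh, ∀ q : ℝ, 0 < q →
        -(ζh ℓ q) ∈ Set.Ioo (-(ρh ℓ)) (-(ρh (ℓ - 1))) ∧
        psi σ A N Nh aa ρ ah ρh (-(ζh ℓ q : ℝ) : ℂ) = (q : ℂ)) :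
    (∀ ℓ ∈ Finset.Icc 1 N,
      ∃ R > (0 : ℝ), ∃ b : ℕ → ℝ, b 0 = ρ ℓ ∧ b 1 = -(aa ℓ * ρ ℓ) ∧
        (∀ q : ℂ, R < ‖q‖ →
          Summable (fun n : ℕ => ‖(b n : ℂ) * q ^ (-(n : ℤ))‖) ∧
          psi σ A N Nh aa ρ ah ρh (∑' n : ℕ, (b n : ℂ) * q ^ (-(n : ℤ))) = q) ∧
        (∀ q : ℝ, R < q →
          (∑' n : ℕ, (b n : ℂ) * (q : ℂ) ^ (-(n : ℤ))) = (ζ ℓ q : ℂ))) ∧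
    (∀ ℓ ∈ Finset.Icc 1 Nh,
      ∃ R > (0 : ℝ), ∃ bh : ℕ → ℝ, bh 0 = -(ρh ℓ) ∧
        (∀ q : ℂ, R < ‖q‖ →
          Summable (fun n : ℕ => ‖(bh n : ℂ) * q ^ (-(n : ℤ))‖) ∧
          psi σ A N Nh aa ρ ah ρh (∑' n : ℕ, (bh n : ℂ) * q ^ (-(n : ℤ))) = q) ∧
        (∀ q : ℝ, R < q →
          (∑' n : ℕ, (bh n : ℂ) * (q : ℂ) ^ (-(n : ℤ))) = (-(ζh ℓ q : ℝ) : ℂ))) :=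
  interior_roots_series_general σ A N Nh aa ρ ah ρh hpos hposh hρ0 hρh0 hmono hmonoh ζ ζh hζ hζh
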